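/- Let P be a closed convex cone in ℝ^d that is spanning (P − P = ℝ^d) and pointed (P ∩ (−P) = {0}). Let Q ⊆ ℝ^d be a closed set with Q ≠ ℝ^d, −P ⊆ Q, Q + Q ⊆ Q, and Q ∪ (−Q) = ℝ^d. Then Q ∩ (−Q) is a linear subspace of ℝ^d of dimension d − 1. -/

import Mathlib

/-
Totality `Q ∪ -Q = univ` makes `Q` closed under `x ↦ n⁻¹ • x` (if `-n⁻¹ • q ∈ Q`, then
`n⁻¹ • q = q + (n - 1) • (-n⁻¹ • q) ∈ Q`), hence under nonnegative rational scalars, and by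
closedness under all nonnegative scalars: `Q` is a closed pointed cone and `Q ∩ -Q` its lineality
space. A linear complement `K` of the lineality space meets `Q ∩ -Q` only in `0`, so `K \ {0}` is
covered by the two disjoint, relatively closed, nonempty sets `Q` and `-Q`. Since `K \ {0}` is
connected as soon as `dim K ≥ 2`, we get `dim K ≤ 1`, and `Q ≠ univ` gives `K ≠ 0`.
-/

open Pointwise Filter Topology Set Module

section AddGroup
variable {G : Type*} [AddGroup G] {Q : Set G}

lemma Set.zero_mem_of_union_neg_eq_univ (htot : Q ∪ -Q = univ) : (0 : G) ∈ Q := by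
  simpa using htot.ge (mem_univ (0 : G))

lemma Set.nsmul_mem_of_add_subset (h0 : (0 : G) ∈ Q) (hadd : Q + Q ⊆ Q) {x : G} (hx : x ∈ Q) :
    ∀ n : ℕ, n • x ∈ Q
  | 0 => by simpa using h0
  | n + 1 => by
    rw [succ_nsmul]
    exact hadd (add_mem_add (nsmul_mem_of_add_subset h0 hadd hx n) hx)

end AddGroup

section Module
variable {E : Type*} [AddCommGroup E] [Module ℝ E] {Q : Set E}

lemma inv_natCast_smul_mem_of_union_neg_eq_univ (hadd : Q + Q ⊆ Q) (htot : Q ∪ -Q = univ)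
    {q : E} (hq : q ∈ Q) (n : ℕ) : (n : ℝ)⁻¹ • q ∈ Q := by
  rcases n with _ | m
  · simpa using zero_mem_of_union_neg_eq_univ htot
  set y := ((m + 1 : ℕ) : ℝ)⁻¹ • q
  rcases htot.ge (mem_univ y) with hy | hy
  · exact hy
  have hqy : q = (m + 1) • y := by
    rw [← Nat.cast_smul_eq_nsmul ℝ, smul_smul, mul_inv_cancel₀ (by positivity), one_smul]
  have : q + m • -y ∈ Q :=
    hadd (add_mem_add hq (nsmul_mem_of_add_subset (zero_mem_of_union_neg_eq_univ htot) hadd hy m))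
  rwa [hqy, succ_nsmul, smul_neg, add_right_comm, add_neg_cancel, zero_add] at this

variable [TopologicalSpace E] [ContinuousSMul ℝ E]

lemma smul_mem_of_isClosed_of_union_neg_eq_univ (hcl : IsClosed Q) (hadd : Q + Q ⊆ Q)
    (htot : Q ∪ -Q = univ) {t : ℝ} (ht : 0 ≤ t) {q : E} (hq : q ∈ Q) : t • q ∈ Q := by
  have hlim : Tendsto (fun n : ℕ ↦ ((⌊t * n⌋₊ : ℝ) / n) • q) atTop (𝓝 (t • q)) :=
    ((tendsto_nat_floor_mul_div_atTop ht).comp tendsto_natCast_atTop_atTop).smul_const q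
  refine hcl.mem_of_tendsto hlim (Eventually.of_forall fun n ↦ ?_)
  rw [div_eq_mul_inv, mul_smul, Nat.cast_smul_eq_nsmul]
  exact nsmul_mem_of_add_subset (zero_mem_of_union_neg_eq_univ htot) hadd
    (inv_natCast_smul_mem_of_union_neg_eq_univ hadd htot hq n) _

def PointedCone.ofIsClosedOfUnionNegEqUniv (hcl : IsClosed Q) (hadd : Q + Q ⊆ Q)
    (htot : Q ∪ -Q = univ) : PointedCone ℝ E where
  carrier := Q
  add_mem' hx hy := hadd (add_mem_add hx hy)
  zero_mem' := zero_mem_of_union_neg_eq_univ htot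
  smul_mem' c _ hx := smul_mem_of_isClosed_of_union_neg_eq_univ hcl hadd htot c.2 hx

end Module

lemma rank_le_one_of_isClosed_of_union_neg_eq_univ {V : Type*} [NormedAddCommGroup V]
    [NormedSpace ℝ V] {A : Set V} (hcl : IsClosed A) (htot : A ∪ -A = univ)
    (hsymm : A ∩ -A ⊆ {0}) : Module.rank ℝ V ≤ 1 := by
  by_contra! hrank
  obtain ⟨u, hu⟩ := rank_pos_iff_exists_ne_zero.mp (zero_lt_one.trans hrank)
  wlog huA : u ∈ A generalizing u
  · exact this (-u) (neg_ne_zero.mpr hu) (by simpa using (htot.ge (mem_univ u)).resolve_left huA)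
  obtain ⟨z, hz0, hz⟩ := isPreconnected_closed_iff.mp
    (isConnected_compl_singleton_of_one_lt_rank hrank 0).isPreconnected A (-A) hcl hcl.neg
    (by simp [htot]) ⟨u, hu, huA⟩ ⟨-u, neg_ne_zero.mpr hu, by simpa using huA⟩
  exact hz0 (hsymm hz)

section FiniteDimensional
variable {E : Type*} [NormedAddCommGroup E] [NormedSpace ℝ E] [FiniteDimensional ℝ E]

theorem PointedCone.finrank_lineal_add_one (C : PointedCone ℝ E) (hcl : IsClosed (C : Set E))
    (htot : (C : Set E) ∪ -C = univ) (hne : (C : Set E) ≠ univ) :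
    finrank ℝ C.lineal + 1 = finrank ℝ E := by
  obtain ⟨K, hK⟩ := C.lineal.exists_isCompl
  rw [← Submodule.finrank_add_eq_of_isCompl hK]
  have hK_rank : Module.rank ℝ K ≤ 1 := by
    refine rank_le_one_of_isClosed_of_union_neg_eq_univ (A := (↑) ⁻¹' (C : Set E))
      (hcl.preimage continuous_subtype_val)
      (eq_univ_of_forall fun x ↦ by simpa using htot.ge (mem_univ (x : E))) ?_
    rintro x ⟨hx, hnx⟩
    exact Subtype.ext <| Submodule.disjoint_def.mp hK.disjoint x ⟨hx, by simpa using hnx⟩ x.2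
  have hK_ne : K ≠ ⊥ := by
    rintro rfl
    exact hne <| eq_univ_of_forall fun x ↦
      C.lineal_le (by simp [eq_top_of_isCompl_bot hK] : x ∈ C.lineal)
  have : finrank ℝ K = 1 :=
    le_antisymm (Module.finrank_le_of_rank_le (by simpa using hK_rank))
      (Nat.one_le_iff_ne_zero.mpr (Submodule.finrank_eq_zero.not.mpr hK_ne))
  rw [this]

end FiniteDimensional

theorem stmt_3_general {d : ℕ}
    (Q : Set (EuclideanSpace ℝ (Fin d)))
    (hQclosed : IsClosed Q) (hQnuniv : Q ≠ Set.univ)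
    (hQadd : Q + Q ⊆ Q) (hQtot : Q ∪ (-Q) = Set.univ) :
    ∃ S : Submodule ℝ (EuclideanSpace ℝ (Fin d)),
      (S : Set (EuclideanSpace ℝ (Fin d))) = Q ∩ (-Q) ∧
      Module.finrank ℝ S = d - 1 := by
  set C := PointedCone.ofIsClosedOfUnionNegEqUniv hQclosed hQadd hQtot
  refine ⟨C.lineal, ?_, ?_⟩
  · ext x
    simp [C, PointedCone.ofIsClosedOfUnionNegEqUniv]
  · have := C.finrank_lineal_add_one hQclosed hQtot hQnuniv
    rw [finrank_euclideanSpace_fin] at this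
    omega

/-- Let `P` be a closed convex cone in `ℝ^d` that is spanning and
pointed. Let `Q ⊆ ℝ^d` be a closed set with `Q ≠ ℝ^d`, `-P ⊆ Q`, `Q + Q ⊆ Q`, and
`Q ∪ (-Q) = ℝ^d`. Then `Q ∩ (-Q)` is a linear subspace of `ℝ^d` of dimension `d - 1`. -/
theorem stmt_3 {d : ℕ}
    (P : Set (EuclideanSpace ℝ (Fin d)))
    (hPclosed : IsClosed P) (hPconvex : Convex ℝ P)
    (hPcone : ∀ (c : ℝ), 0 ≤ c → ∀ x ∈ P, c • x ∈ P)
    (hPspan : P - P = Set.univ)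
    (hPpointed : P ∩ (-P) = {0})
    (Q : Set (EuclideanSpace ℝ (Fin d)))
    (hQclosed : IsClosed Q) (hQnuniv : Q ≠ Set.univ)
    (hPQ : -P ⊆ Q) (hQadd : Q + Q ⊆ Q) (hQtot : Q ∪ (-Q) = Set.univ) :
    ∃ S : Submodule ℝ (EuclideanSpace ℝ (Fin d)),
      (S : Set (EuclideanSpace ℝ (Fin d))) = Q ∩ (-Q) ∧
      Module.finrank ℝ S = d - 1 :=
  stmt_3_general Q hQclosed hQnuniv hQadd hQtot
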